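/- Let H₁, H₂ be Hilbert spaces, a ∈ B(H₁, H₂), and b an injective selfadjoint (possibly unbounded) operator on H₂ commuting with aa* such that Im a ⊆ D(b). Set c := b ∘ a (a bounded operator H₁ → H₂). Then a*c and ac* are selfadjoint, ker a = ker c, and ker a* = ker c*. -/

import Mathlib

/-!
Write `S := c a* = b a a*`. Symmetry of `b` gives `⟪c ζ, a ζ'⟫ = ⟪a ζ, c ζ'⟫`, which is the
selfadjointness of `a* c`. Commutation of `b` with `a a*` gives
`⟪S ξ, η⟫ = ⟪a a* ξ, b η⟫ = ⟪ξ, b a a* η⟫ = ⟪ξ, S η⟫` for `η` in the dense domain of `b`, so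
`S` is selfadjoint and `a c* = S* = S = c a*`. Injectivity of `b` gives `ker a = ker c`, and the
identity `c a* = a c*` transports this to the adjoints: if `a* η = 0` then
`a c* η = c a* η = 0`, so `c c* η = 0` and hence `c* η = 0`; symmetrically in `a` and `c`.
-/

open ContinuousLinearMap

theorem LinearMap.ker_eq_ker_of_eq_comp {R M N : Type*} [Ring R] [AddCommGroup M] [Module R M]
    [AddCommGroup N] [Module R N] {a c : M →ₗ[R] N} {b : N →ₗ.[R] N}
    (hmem : ∀ ζ : M, a ζ ∈ b.domain) (hinj : ∀ ξ : b.domain, b ξ = 0 → (ξ : N) = 0)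
    (hc : ∀ ζ : M, c ζ = b ⟨a ζ, hmem ζ⟩) :
    LinearMap.ker a = LinearMap.ker c := by
  ext ζ
  simp only [LinearMap.mem_ker, hc]
  constructor
  · intro hζ
    have : (⟨a ζ, hmem ζ⟩ : b.domain) = 0 := Subtype.ext hζ
    rw [this, LinearPMap.map_zero]
  · exact hinj ⟨a ζ, hmem ζ⟩

section

variable {𝕜 E F : Type*} [RCLike 𝕜]
  [NormedAddCommGroup E] [InnerProductSpace 𝕜 E] [CompleteSpace E]
  [NormedAddCommGroup F] [InnerProductSpace 𝕜 F] [CompleteSpace F]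

theorem IsSelfAdjoint.isFormalAdjoint_self {b : F →ₗ.[𝕜] F} (hb : IsSelfAdjoint b) :
    b.IsFormalAdjoint b := by
  have h := LinearPMap.adjoint_isFormalAdjoint hb.dense_domain
  rwa [LinearPMap.isSelfAdjoint_def.mp hb] at h

namespace ContinuousLinearMap

theorem ker_adjoint_le_of_comp_adjoint_eq {a c : E →L[𝕜] F}
    (hker : LinearMap.ker (a : E →ₗ[𝕜] F) ≤ LinearMap.ker (c : E →ₗ[𝕜] F))
    (h : c ∘L adjoint a = a ∘L adjoint c) :
    LinearMap.ker (adjoint a : F →ₗ[𝕜] E) ≤ LinearMap.ker (adjoint c : F →ₗ[𝕜] E) := by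
  intro η hη
  simp only [LinearMap.mem_ker, coe_coe] at hη ⊢
  have hac : a (adjoint c η) = 0 := by
    rw [← comp_apply, ← h, comp_apply, hη, map_zero]
  have hcc : c (adjoint c η) = 0 := hker hac
  rw [← inner_self_eq_zero (𝕜 := 𝕜), adjoint_inner_left, hcc, inner_zero_right]

variable {a c : E →L[𝕜] F} {b : F →ₗ.[𝕜] F} (hmem : ∀ ζ : E, a ζ ∈ b.domain)

include hmem

theorem isSelfAdjoint_adjoint_comp_of_eq_comp (hb : b.IsFormalAdjoint b)
    (hc : ∀ ζ : E, c ζ = b ⟨a ζ, hmem ζ⟩) :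
    IsSelfAdjoint (adjoint a ∘L c) := by
  refine isSelfAdjoint_iff_isSymmetric.mpr fun ζ ζ' => ?_
  calc inner 𝕜 ((adjoint a ∘L c) ζ) ζ' = inner 𝕜 (c ζ) (a ζ') := by
        rw [comp_apply, adjoint_inner_left]
    _ = inner 𝕜 (a ζ) (c ζ') := by rw [hc, hc]; exact hb ⟨a ζ, hmem ζ⟩ ⟨a ζ', hmem ζ'⟩
    _ = inner 𝕜 ζ ((adjoint a ∘L c) ζ') := by rw [comp_apply, adjoint_inner_right]

theorem isSelfAdjoint_comp_adjoint_of_eq_comp (hb : IsSelfAdjoint b)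
    (hcomm : ∀ ξ : b.domain, ∃ h : (a ∘L adjoint a) (ξ : F) ∈ b.domain,
      b ⟨(a ∘L adjoint a) (ξ : F), h⟩ = (a ∘L adjoint a) (b ξ))
    (hc : ∀ ζ : E, c ζ = b ⟨a ζ, hmem ζ⟩) :
    IsSelfAdjoint (c ∘L adjoint a) := by
  set S := c ∘L adjoint a
  have hS : ∀ ξ, S ξ = b ⟨a (adjoint a ξ), hmem _⟩ := fun ξ => hc _
  suffices Set.EqOn (adjoint S) S b.domain from isSelfAdjoint_iff'.mpr <| DFunLike.coe_injective <|
    (adjoint S).continuous.ext_on hb.dense_domain S.continuous this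
  intro η hη
  obtain ⟨hdom, hbη⟩ := hcomm ⟨η, hη⟩
  refine ext_inner_left 𝕜 fun ξ => ?_
  calc inner 𝕜 ξ (adjoint S η) = inner 𝕜 (S ξ) η := adjoint_inner_right S ξ η
    _ = inner 𝕜 (a (adjoint a ξ)) (b ⟨η, hη⟩) := by
        rw [hS]; exact hb.isFormalAdjoint_self _ ⟨η, hη⟩
    _ = inner 𝕜 ξ ((a ∘L adjoint a) (b ⟨η, hη⟩)) := by
        rw [comp_apply, ← adjoint_inner_right, adjoint_inner_left]
    _ = inner 𝕜 ξ (S η) := by rw [← hbη, hS]; rfl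

end ContinuousLinearMap

end

/-- Converse of the factorization lemma: if `b` is an injective
selfadjoint (possibly unbounded) operator on `H₂` commuting with `aa*`
(`aa* b ⊆ b aa*`), `Im a ⊆ D(b)`, and `c = b ∘ a` is a bounded operator, then
`a*c` and `ac*` are selfadjoint, `ker a = ker c` and `ker a* = ker c*`. -/
theorem stmt2 {H₁ H₂ : Type*}
    [NormedAddCommGroup H₁] [InnerProductSpace ℂ H₁] [CompleteSpace H₁]
    [NormedAddCommGroup H₂] [InnerProductSpace ℂ H₂] [CompleteSpace H₂]
    (a c : H₁ →L[ℂ] H₂) (b : H₂ →ₗ.[ℂ] H₂)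
    (hsa : IsSelfAdjoint b)
    (hinj : ∀ ξ : b.domain, b ξ = 0 → (ξ : H₂) = 0)
    (hcomm : ∀ ξ : b.domain,
      ∃ h : (a ∘L ContinuousLinearMap.adjoint a) (ξ : H₂) ∈ b.domain,
        b ⟨(a ∘L ContinuousLinearMap.adjoint a) (ξ : H₂), h⟩
          = (a ∘L ContinuousLinearMap.adjoint a) (b ξ))
    (hmem : ∀ ζ : H₁, a ζ ∈ b.domain)
    (hc : ∀ ζ : H₁, c ζ = b ⟨a ζ, hmem ζ⟩) :
    IsSelfAdjoint (ContinuousLinearMap.adjoint a ∘L c) ∧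
    IsSelfAdjoint (a ∘L ContinuousLinearMap.adjoint c) ∧
    LinearMap.ker (a : H₁ →ₗ[ℂ] H₂) = LinearMap.ker (c : H₁ →ₗ[ℂ] H₂) ∧
    LinearMap.ker (ContinuousLinearMap.adjoint a : H₂ →ₗ[ℂ] H₁)
      = LinearMap.ker (ContinuousLinearMap.adjoint c : H₂ →ₗ[ℂ] H₁) := by
  have hS := isSelfAdjoint_comp_adjoint_of_eq_comp hmem hsa hcomm hc
  have hca : c ∘L adjoint a = a ∘L adjoint c := by
    rw [← isSelfAdjoint_iff'.mp hS, adjoint_comp, adjoint_adjoint]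
  have hker := LinearMap.ker_eq_ker_of_eq_comp (a := (a : H₁ →ₗ[ℂ] H₂)) hmem hinj hc
  refine ⟨isSelfAdjoint_adjoint_comp_of_eq_comp hmem hsa.isFormalAdjoint_self hc,
    hca ▸ hS, hker, le_antisymm (ker_adjoint_le_of_comp_adjoint_eq hker.le hca)
      (ker_adjoint_le_of_comp_adjoint_eq hker.ge hca.symm)⟩
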